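/- Let $s_1, s_2, s_3 \in \mathbb{R}$ satisfy $s_i + s_j \geq 0$ for all $i \neq j$ and $s_1 + s_2 + s_3 > 3/2$. Then the trilinear form $b(u,v,w) = \sum_{i,j=1}^3 \int_{\mathbb{T}^3_L} u_j \partial_{x_j} v_i \, w_i \, dx$, initially defined on divergence-free trigonometric polynomials, extends continuously to $V^{s_1} \times V^{s_2+1} \times V^{s_3}$: there exists $c > 0$ depending only on the $s_i$ such that $|b(u,v,w)| \leq c \|u\|_{s_1} \|v\|_{s_2+1} \|w\|_{s_3}$ for all $u \in V^{s_1}$, $v \in V^{s_2+1}$, $w \in V^{s_3}$. -/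

import Mathlib

open MeasureTheory Real Filter

noncomputable section

/-- Fourier coefficients of a (vector-valued) distribution on the 3-torus `𝕋³_L`:
the field `u(x) = ∑_{k} e^{i x · (2πk/L)} û(k)`. -/
abbrev Coeffs := (Fin 3 → ℤ) → Fin 3 → ℂ

/-- Fourier coefficients of a scalar distribution on the 3-torus. -/
abbrev SCoeffs := (Fin 3 → ℤ) → ℂ

/-- `|ζ|²` for the frequency `ζ = 2πk/L`. -/
def freqSq (L : ℝ) (k : Fin 3 → ℤ) : ℝ := (2 * π / L) ^ 2 * ∑ i, ((k i : ℝ)) ^ 2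

/-- homogeneous Sobolev weight `|ζ|^{2s}` (vanishing at the zero mode). -/
def wt (L s : ℝ) (k : Fin 3 → ℤ) : ℝ := if k = 0 then 0 else (freqSq L k) ^ s

/-- squared euclidean norm of the `k`-th Fourier coefficient. -/
def coefSq (u : Coeffs) (k : Fin 3 → ℤ) : ℝ := ∑ i, norm (u k i) ^ 2

/-- squared norm of `V^s = {u ∈ Ḣ^s(𝕋³_L)³ : div u = 0}`. -/
def VnormSq (L s : ℝ) (u : Coeffs) : ℝ := ∑' k, wt L s k * coefSq u k

def Vnorm (L s : ℝ) (u : Coeffs) : ℝ := Real.sqrt (VnormSq L s u)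

/-- membership in `V^s`: mean zero, real-valued, divergence free, finite `Ḣ^s`-norm. -/
structure MemV (L s : ℝ) (u : Coeffs) : Prop where
  mean_zero : u 0 = 0
  real_field : ∀ k i, u (-k) i = starRingEnd ℂ (u k i)
  div_free : ∀ k, (∑ j, ((k j : ℤ) : ℂ) * u k j) = 0
  summable : Summable fun k => wt L s k * coefSq u k

/-- the (complex) duality pairing `⟨u, v⟩ = ∫_{𝕋³_L} u · v dx` in Fourier variables. -/
def pairC (L : ℝ) (u v : Coeffs) : ℂ := ((L ^ 3 : ℝ) : ℂ) * ∑' k, ∑ i, u k i * v (-k) i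

/-- the (real) duality pairing between `V^{-s}` and `V^{s}`. -/
def pairR (L : ℝ) (u v : Coeffs) : ℝ := (pairC L u v).re

/-- the power `A^r` of the Stokes operator `A = -Δ` (Fourier multiplier `|ζ|^{2r}`). -/
def Apow (L r : ℝ) (u : Coeffs) : Coeffs := fun k i => ((freqSq L k ^ r : ℝ) : ℂ) * u k i

/-- the trilinear convection form
`b(u,v,w) = ∑_{i,j} ∫_{𝕋³_L} u_j ∂_{x_j} v_i w_i dx` in Fourier variables. -/
def bform (L : ℝ) (u v w : Coeffs) : ℝ :=
  (((L ^ 3 : ℝ) : ℂ) * ∑' p : (Fin 3 → ℤ) × (Fin 3 → ℤ),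
      ∑ i, ∑ j,
        u p.1 j * (Complex.I * ((2 * π / L : ℝ) : ℂ) * ((p.2 j : ℤ) : ℂ)) * v p.2 i *
          w (-(p.1 + p.2)) i).re

/-- Fourier coefficients of the convection term `(u · ∇) v`. -/
def convF (L : ℝ) (u v : Coeffs) : Coeffs := fun k i =>
  ∑' m, ∑ j, u m j * (Complex.I * ((2 * π / L : ℝ) : ℂ) * (((k - m) j : ℤ) : ℂ)) * v (k - m) i

/-- the Leray (Helmholtz) projection onto divergence-free fields. -/
def leray (w : Coeffs) : Coeffs := fun k i =>
  if k = 0 then 0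
  else w k i - ((k i : ℤ) : ℂ) * (∑ j, ((k j : ℤ) : ℂ) * w k j) / (∑ j, (((k j : ℤ) : ℂ)) ^ 2)

/-- the bilinear operator `B(u,v) = P (u · ∇) v`, satisfying `⟨B(u,v), w⟩ = b(u,v,w)`. -/
def Bop (L : ℝ) (u v : Coeffs) : Coeffs := leray (convF L u v)

/-- membership in `L₂(a,b; V^s)` for a time-dependent field. -/
def MemL2V (L s a b : ℝ) (u : ℝ → Coeffs) : Prop :=
  (∀ k i, Measurable fun t => u t k i) ∧
    (∀ t ∈ Set.Ioo a b, MemV L s (u t)) ∧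
      IntegrableOn (fun t => VnormSq L s (u t)) (Set.Ioo a b)

/-- membership in `L_∞(a,b; V^s)` with explicit bound `M`. -/
def BddV (L s a b : ℝ) (u : ℝ → Coeffs) (M : ℝ) : Prop :=
  ∀ t ∈ Set.Ioo a b, Vnorm L s (u t) ≤ M

/-- membership in `C^γ([a,b]; V^s)`. -/
def HolderV (L s γ a b : ℝ) (u : ℝ → Coeffs) : Prop :=
  ∃ C : ℝ, ∀ t ∈ Set.Icc a b, ∀ τ ∈ Set.Icc a b, Vnorm L s (u t - u τ) ≤ C * |t - τ| ^ γ

/-- membership in `C([a,b]; V^s)`. -/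
def ContV (L s a b : ℝ) (u : ℝ → Coeffs) : Prop :=
  ∀ t₀ ∈ Set.Icc a b,
    Tendsto (fun t => Vnorm L s (u t - u t₀)) (nhdsWithin t₀ (Set.Icc a b)) (nhds 0)

/-- weak continuity in `V⁰` on `[a,b]`. -/
def WeakContV0 (L a b : ℝ) (u : ℝ → Coeffs) : Prop :=
  ∀ v : Coeffs, MemV L 0 v → ContinuousOn (fun t => pairR L (u t) v) (Set.Icc a b)

/-- a test function in `C₀^∞((a,b))`. -/
structure TestFun (a b : ℝ) (φ : ℝ → ℝ) : Prop where
  smooth : ContDiff ℝ (⊤ : ℕ∞) φ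
  supp : ∀ t, t ∉ Set.Ioo a b → φ t = 0

/-- weak solution of the linearized Navier–Stokes equation
`u' + ν A u + B(ψ(t), u) = f`, `u(0) = u₀`, on `(0,μ)`, as an equation in `V^{-1}`
against test functions `v ∈ V¹`. -/
structure IsWeakSolLin (L ν μ : ℝ) (ψ : ℝ → Coeffs) (f u₀ : Coeffs) (u : ℝ → Coeffs) : Prop where
  regL2 : MemL2V L 1 0 μ u
  init : u 0 = u₀
  eqn : ∀ v : Coeffs, MemV L 1 v → ∀ φ : ℝ → ℝ, TestFun 0 μ φ →
    (∫ t in Set.Ioo (0 : ℝ) μ,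
        (-(pairR L (u t) v) * deriv φ t
          + ν * pairR L (Apow L (1/2) (u t)) (Apow L (1/2) v) * φ t
          + bform L (ψ t) (u t) v * φ t
          - pairR L f v * φ t)) = 0

/-- weak solution of the delayed 3D Navier–Stokes equations
`du(t) + (ν A u(t) + B(u(t-μ), u(t))) dt = f dt` on `[-μ, T]`,
with `u(0) = u₀` and history `u(t) = φd(t)` for `t ∈ [-μ, 0)`. -/
structure IsWeakSolDelay (L ν α μ T : ℝ) (φd : ℝ → Coeffs) (f u₀ : Coeffs)
    (u : ℝ → Coeffs) : Prop where
  regL2 : MemL2V L (1 + α) (-μ) T u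
  init : u 0 = u₀
  hist : ∀ t ∈ Set.Ico (-μ) (0 : ℝ), u t = φd t
  eqn : ∀ v : Coeffs, MemV L (α + 1) v → ∀ φ : ℝ → ℝ, TestFun 0 T φ →
    (∫ t in Set.Ioo (0 : ℝ) T,
        (-(pairR L (u t) v) * deriv φ t
          + ν * pairR L (Apow L (1/2) (u t)) (Apow L (1/2) v) * φ t
          + bform L (u (t - μ)) (u t) v * φ t
          - pairR L f v * φ t)) = 0

/-- the distributional time derivative of `u` belongs to `L₂(a,b; V^s)`;
`g` is the derivative. -/
def HasL2DerivV (L s a b : ℝ) (u g : ℝ → Coeffs) : Prop :=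
  MemL2V L s a b g ∧
    ∀ k i, ∀ φ : ℝ → ℝ, TestFun a b φ →
      (∫ t in Set.Ioo a b, (u t k i * ((deriv φ t : ℝ) : ℂ) + g t k i * ((φ t : ℝ) : ℂ))) = 0

/- Scalar periodic Sobolev spaces `H^r(𝕋³_L)`. -/

/-- inhomogeneous Sobolev weight `(1 + |ζ|²)^r`. -/
def swt (L r : ℝ) (k : Fin 3 → ℤ) : ℝ := (1 + freqSq L k) ^ r

/-- squared `H^r(𝕋³_L)` norm. -/
def SnormSq (L r : ℝ) (ψ : SCoeffs) : ℝ := ∑' k, swt L r k * norm (ψ k) ^ 2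

/-- membership in `H^r(𝕋³_L)`: real-valued with finite norm. -/
def MemH (L r : ℝ) (ψ : SCoeffs) : Prop :=
  (∀ k, ψ (-k) = starRingEnd ℂ (ψ k)) ∧
    Summable fun k => swt L r k * norm (ψ k) ^ 2

/-- Fourier coefficients of the product `ψ φ` (convolution). -/
def sconv (ψ φ : SCoeffs) : SCoeffs := fun k => ∑' m, ψ m * φ (k - m)

end

noncomputable section
namespace TriEst

abbrev G : Type := Fin 3 → ℤ

variable {L : ℝ}

lemma sumsq_nonneg (k : G) : 0 ≤ ∑ i, ((k i : ℝ)) ^ 2 :=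
  Finset.sum_nonneg fun _ _ => sq_nonneg _

lemma freqSq_nonneg (L : ℝ) (k : G) : 0 ≤ freqSq L k :=
  mul_nonneg (sq_nonneg _) (sumsq_nonneg k)

lemma freqSq_zero (L : ℝ) : freqSq L (0 : G) = 0 := by
  simp [freqSq]

lemma one_le_sumsq {k : G} (hk : k ≠ 0) : 1 ≤ ∑ i, ((k i : ℝ)) ^ 2 := by
  have : ∃ i, k i ≠ 0 := by
    by_contra h
    push_neg at h
    exact hk (funext fun i => h i)
  obtain ⟨i, hi⟩ := this
  have h1 : (1 : ℝ) ≤ ((k i : ℝ)) ^ 2 := by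
    have : (1 : ℤ) ≤ (k i) ^ 2 := by
      rcases lt_or_gt_of_ne hi with h | h <;> nlinarith
    exact_mod_cast this
  calc (1:ℝ) ≤ ((k i : ℝ))^2 := h1
    _ ≤ ∑ j, ((k j : ℝ))^2 :=
      Finset.single_le_sum (fun j _ => sq_nonneg ((k j : ℝ))) (Finset.mem_univ i)

lemma freqSq_pos (hL : 0 < L) {k : G} (hk : k ≠ 0) : 0 < freqSq L k := by
  have h1 : (0:ℝ) < 2 * π / L := by positivity
  have h2 := one_le_sumsq hk
  rw [freqSq]
  nlinarith

lemma freqSq_neg (L : ℝ) (k : G) : freqSq L (-k) = freqSq L k := by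
  simp [freqSq]

lemma sqrt_sumsq_triangle (k m : G) :
    Real.sqrt (∑ i, (((k + m) i : ℝ)) ^ 2)
      ≤ Real.sqrt (∑ i, ((k i : ℝ)) ^ 2) + Real.sqrt (∑ i, ((m i : ℝ)) ^ 2) := by
  have e : ∀ j : G, ‖(WithLp.equiv 2 (Fin 3 → ℝ)).symm (fun i => (j i : ℝ))‖
      = Real.sqrt (∑ i, ((j i : ℝ)) ^ 2) := by
    intro j
    rw [EuclideanSpace.norm_eq]
    congr 1
    refine Finset.sum_congr rfl fun i _ => ?_
    rw [WithLp.equiv_symm_apply, PiLp.toLp_apply, Real.norm_eq_abs, sq_abs]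
  have h1 := norm_add_le ((WithLp.equiv 2 (Fin 3 → ℝ)).symm (fun i => (k i : ℝ)))
    ((WithLp.equiv 2 (Fin 3 → ℝ)).symm (fun i => (m i : ℝ)))
  have hsum : (WithLp.equiv 2 (Fin 3 → ℝ)).symm (fun i => (k i : ℝ))
        + (WithLp.equiv 2 (Fin 3 → ℝ)).symm (fun i => (m i : ℝ))
      = (WithLp.equiv 2 (Fin 3 → ℝ)).symm (fun i => ((k + m) i : ℝ)) := by
    ext i
    simp
  rw [hsum, e, e, e] at h1
  exact h1

lemma sqrt_freqSq_eq (hL : 0 < L) (j : G) :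
    Real.sqrt (freqSq L j) = (2 * π / L) * Real.sqrt (∑ i, ((j i : ℝ)) ^ 2) := by
  rw [freqSq, Real.sqrt_mul (sq_nonneg _), Real.sqrt_sq_eq_abs, abs_of_pos (by positivity)]

lemma sqrt_freqSq_triangle (hL : 0 < L) (k m : G) :
    Real.sqrt (freqSq L (k + m)) ≤ Real.sqrt (freqSq L k) + Real.sqrt (freqSq L m) := by
  rw [sqrt_freqSq_eq hL, sqrt_freqSq_eq hL, sqrt_freqSq_eq hL, ← mul_add]
  refine mul_le_mul_of_nonneg_left (sqrt_sumsq_triangle k m) (by positivity)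

/-- the weight `ν(k)^{-t} = |2πk/L|^{-t}`, with the zero-mode killed. -/
def wneg (L t : ℝ) (k : G) : ℝ := if k = 0 then 0 else freqSq L k ^ (-t/2)

lemma wneg_nonneg (L t : ℝ) (k : G) : 0 ≤ wneg L t k := by
  unfold wneg
  split
  · exact le_refl 0
  · exact Real.rpow_nonneg (freqSq_nonneg L k) _

lemma wneg_neg (L t : ℝ) (k : G) : wneg L t (-k) = wneg L t k := by
  unfold wneg
  simp only [freqSq_neg, neg_eq_zero]

lemma wneg_sq (hL : 0 < L) {t : ℝ} {k : G} (hk : k ≠ 0) :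
    wneg L t k ^ 2 = freqSq L k ^ (-t) := by
  rw [wneg, if_neg hk, ← Real.rpow_natCast (freqSq L k ^ (-t/2)) 2,
    ← Real.rpow_mul (freqSq_nonneg L k)]
  norm_num

lemma wneg_zero (L t : ℝ) : wneg L t (0 : G) = 0 := if_pos rfl

lemma helper2 {X Y α β : ℝ} (hX : 0 < X) (hY : 0 < Y) (hα : 0 ≤ α) (hβ : 0 ≤ β) :
    X ^ (-α) * Y ^ (-β) ≤ X ^ (-(α+β)) + Y ^ (-(α+β)) := by
  rcases le_total X Y with h | h
  · have h1 : Y ^ (-β) ≤ X ^ (-β) := Real.rpow_le_rpow_of_nonpos hX h (by linarith)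
    have h2 : X ^ (-α) * Y ^ (-β) ≤ X ^ (-α) * X ^ (-β) :=
      mul_le_mul_of_nonneg_left h1 (Real.rpow_nonneg hX.le _)
    have h3 : X ^ (-α) * X ^ (-β) = X ^ (-(α+β)) := by
      rw [← Real.rpow_add hX, ← neg_add]
    have h4 : (0:ℝ) ≤ Y ^ (-(α+β)) := Real.rpow_nonneg hY.le _
    linarith
  · have h1 : X ^ (-α) ≤ Y ^ (-α) := Real.rpow_le_rpow_of_nonpos hY h (by linarith)
    have h2 : X ^ (-α) * Y ^ (-β) ≤ Y ^ (-α) * Y ^ (-β) :=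
      mul_le_mul_of_nonneg_right h1 (Real.rpow_nonneg hY.le _)
    have h3 : Y ^ (-α) * Y ^ (-β) = Y ^ (-(α+β)) := by
      rw [← Real.rpow_add hY, ← neg_add]
    have h4 : (0:ℝ) ≤ X ^ (-(α+β)) := Real.rpow_nonneg hX.le _
    linarith

lemma wneg_sq_mul_le (hL : 0 < L) {α β : ℝ} (hα : 0 ≤ α) (hβ : 0 ≤ β) (k j : G) :
    wneg L α k ^ 2 * wneg L β j ^ 2 ≤ wneg L (α+β) k ^ 2 + wneg L (α+β) j ^ 2 := by
  by_cases hk : k = 0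
  · rw [hk, wneg_zero]
    have h4 : (0:ℝ) ≤ wneg L (α+β) (0:G) ^ 2 + wneg L (α+β) j ^ 2 := by positivity
    nlinarith
  by_cases hj : j = 0
  · rw [hj, wneg_zero]
    have h4 : (0:ℝ) ≤ wneg L (α+β) k ^ 2 + wneg L (α+β) (0:G) ^ 2 := by positivity
    nlinarith
  rw [wneg_sq hL hk, wneg_sq hL hj, wneg_sq hL hk, wneg_sq hL hj]
  exact helper2 (freqSq_pos hL hk) (freqSq_pos hL hj) hα hβ

lemma elim_aux {z w : ℝ} (hw : 0 < w) (hz : 0 < z) (c : ℝ)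
    (h1 : c < 0 → z ≤ 2 * w) (h2 : 0 ≤ c → w ≤ z) :
    z ^ (-c) ≤ 2 ^ |c| * w ^ (-c) := by
  rcases le_or_gt 0 c with hc | hc
  · have ha : z ^ (-c) ≤ w ^ (-c) := Real.rpow_le_rpow_of_nonpos hw (h2 hc) (by linarith)
    have hb : (1:ℝ) ≤ 2 ^ |c| := by
      calc (1:ℝ) = 2 ^ (0:ℝ) := (Real.rpow_zero 2).symm
        _ ≤ 2 ^ |c| := Real.rpow_le_rpow_of_exponent_le one_le_two (abs_nonneg c)
    nlinarith [Real.rpow_nonneg hw.le (-c)]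
  · have habs : |c| = -c := abs_of_neg hc
    have h0 : z ^ (-c) ≤ (2*w) ^ (-c) := Real.rpow_le_rpow hz.le (h1 hc) (by linarith)
    rw [Real.mul_rpow (by norm_num) hw.le] at h0
    rw [habs]
    exact h0

lemma leaf {x y z : ℝ} (hx : 0 < x) (hy : 0 < y) (hz : 0 < z) (a b c : ℝ)
    (h1 : c < 0 → z ≤ 2 * y) (h2 : 0 ≤ c → y ≤ z) :
    x ^ (-a) * y ^ (-b) * z ^ (-c) ≤ 2 ^ |c| * (x ^ (-a) * y ^ (-(b+c))) := by
  have h := elim_aux hy hz c h1 h2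
  calc x ^ (-a) * y ^ (-b) * z ^ (-c) ≤ x ^ (-a) * y ^ (-b) * (2 ^ |c| * y ^ (-c)) := by
        refine mul_le_mul_of_nonneg_left h (by positivity)
    _ = 2 ^ |c| * (x ^ (-a) * (y ^ (-b) * y ^ (-c))) := by ring
    _ = 2 ^ |c| * (x ^ (-a) * y ^ (-(b+c))) := by rw [← Real.rpow_add hy, ← neg_add]

lemma tri_pointwise (s1 s2 s3 : ℝ) (h12 : 0 ≤ s1+s2) (h13 : 0 ≤ s1+s3) (h23 : 0 ≤ s2+s3)
    {x y z : ℝ} (hx : 0 < x) (hy : 0 < y) (hz : 0 < z)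
    (hzxy : z ≤ x + y) (hxyz : x ≤ y + z) (hyxz : y ≤ x + z) :
    x ^ (-s1) * y ^ (-s2) * z ^ (-s3) ≤
      (2:ℝ) ^ (|s1|+|s2|+|s3|) *
        (x ^ (-(max s1 0)) * y ^ (-(s1+s2+s3 - max s1 0))
        + x ^ (-(s1+s2+s3 - max s2 0)) * y ^ (-(max s2 0))
        + x ^ (-(s1+s2+s3 - max s3 0)) * z ^ (-(max s3 0))
        + x ^ (-(max s1 0)) * z ^ (-(s1+s2+s3 - max s1 0))
        + y ^ (-(max s2 0)) * z ^ (-(s1+s2+s3 - max s2 0))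
        + y ^ (-(s1+s2+s3 - max s3 0)) * z ^ (-(max s3 0))) := by
  have hA1 : (0:ℝ) ≤ x ^ (-(max s1 0)) * y ^ (-(s1+s2+s3 - max s1 0)) := by positivity
  have hA2 : (0:ℝ) ≤ x ^ (-(s1+s2+s3 - max s2 0)) * y ^ (-(max s2 0)) := by positivity
  have hA3 : (0:ℝ) ≤ x ^ (-(s1+s2+s3 - max s3 0)) * z ^ (-(max s3 0)) := by positivity
  have hA4 : (0:ℝ) ≤ x ^ (-(max s1 0)) * z ^ (-(s1+s2+s3 - max s1 0)) := by positivity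
  have hA5 : (0:ℝ) ≤ y ^ (-(max s2 0)) * z ^ (-(s1+s2+s3 - max s2 0)) := by positivity
  have hA6 : (0:ℝ) ≤ y ^ (-(s1+s2+s3 - max s3 0)) * z ^ (-(max s3 0)) := by positivity
  have hcc : ∀ c : ℝ, |c| ≤ |s1|+|s2|+|s3| → (2:ℝ) ^ |c| ≤ (2:ℝ) ^ (|s1|+|s2|+|s3|) :=
    fun c hc => Real.rpow_le_rpow_of_exponent_le one_le_two hc
  have habs1 : |s1| ≤ |s1|+|s2|+|s3| := by
    have := abs_nonneg s2; have := abs_nonneg s3; linarith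
  have habs2 : |s2| ≤ |s1|+|s2|+|s3| := by
    have := abs_nonneg s1; have := abs_nonneg s3; linarith
  have habs3 : |s3| ≤ |s1|+|s2|+|s3| := by
    have := abs_nonneg s1; have := abs_nonneg s2; linarith
  by_cases hs1 : 0 ≤ s1
  · by_cases hs2 : 0 ≤ s2
    · by_cases hs3 : 0 ≤ s3
      · -- all nonnegative
        rcases le_total y z with hyz | hzy
        · have hb := leaf hx hy hz s1 s2 s3 (fun hc => absurd hc (not_lt.mpr hs3))
            (fun _ => hyz)
          have e : x ^ (-(max s1 0)) * y ^ (-(s1+s2+s3 - max s1 0))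
              = x ^ (-s1) * y ^ (-(s2+s3)) := by
            rw [max_eq_left hs1, show s1+s2+s3-s1 = s2+s3 from by ring]
          calc x ^ (-s1) * y ^ (-s2) * z ^ (-s3)
              ≤ 2 ^ |s3| * (x ^ (-s1) * y ^ (-(s2+s3))) := hb
            _ ≤ _ := by
                refine mul_le_mul (hcc _ habs3) ?_ (by positivity) (by positivity)
                rw [← e]; linarith
        · have hb := leaf hx hz hy s1 s3 s2 (fun hc => absurd hc (not_lt.mpr hs2))
            (fun _ => hzy)
          have e : x ^ (-(max s1 0)) * z ^ (-(s1+s2+s3 - max s1 0))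
              = x ^ (-s1) * z ^ (-(s3+s2)) := by
            rw [max_eq_left hs1, show s1+s2+s3-s1 = s3+s2 from by ring]
          calc x ^ (-s1) * y ^ (-s2) * z ^ (-s3)
              = x ^ (-s1) * z ^ (-s3) * y ^ (-s2) := by ring
            _ ≤ 2 ^ |s2| * (x ^ (-s1) * z ^ (-(s3+s2))) := hb
            _ ≤ _ := by
                refine mul_le_mul (hcc _ habs2) ?_ (by positivity) (by positivity)
                rw [← e]; linarith
      · -- s3 < 0
        push_neg at hs3
        rcases le_total x y with hxy | hyx
        · have hb := leaf hx hy hz s1 s2 s3 (fun _ => by linarith)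
            (fun h => absurd h (not_le.mpr hs3))
          have e : x ^ (-(max s1 0)) * y ^ (-(s1+s2+s3 - max s1 0))
              = x ^ (-s1) * y ^ (-(s2+s3)) := by
            rw [max_eq_left hs1, show s1+s2+s3-s1 = s2+s3 from by ring]
          calc x ^ (-s1) * y ^ (-s2) * z ^ (-s3)
              ≤ 2 ^ |s3| * (x ^ (-s1) * y ^ (-(s2+s3))) := hb
            _ ≤ _ := by
                refine mul_le_mul (hcc _ habs3) ?_ (by positivity) (by positivity)
                rw [← e]; linarith
        · have hb := leaf hy hx hz s2 s1 s3 (fun _ => by linarith)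
            (fun h => absurd h (not_le.mpr hs3))
          have e : x ^ (-(s1+s2+s3 - max s2 0)) * y ^ (-(max s2 0))
              = x ^ (-(s1+s3)) * y ^ (-s2) := by
            rw [max_eq_left hs2, show s1+s2+s3-s2 = s1+s3 from by ring]
          calc x ^ (-s1) * y ^ (-s2) * z ^ (-s3)
              = y ^ (-s2) * x ^ (-s1) * z ^ (-s3) := by ring
            _ ≤ 2 ^ |s3| * (y ^ (-s2) * x ^ (-(s1+s3))) := hb
            _ = 2 ^ |s3| * (x ^ (-(s1+s3)) * y ^ (-s2)) := by ring
            _ ≤ _ := by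
                refine mul_le_mul (hcc _ habs3) ?_ (by positivity) (by positivity)
                rw [← e]; linarith
    · -- s2 < 0, hence s1 ≥ 0, s3 ≥ 0
      push_neg at hs2
      have hs3 : 0 ≤ s3 := by linarith
      rcases le_total x z with hxz | hzx
      · have hb := leaf hx hz hy s1 s3 s2 (fun _ => by linarith)
          (fun h => absurd h (not_le.mpr hs2))
        have e : x ^ (-(max s1 0)) * z ^ (-(s1+s2+s3 - max s1 0))
            = x ^ (-s1) * z ^ (-(s3+s2)) := by
          rw [max_eq_left hs1, show s1+s2+s3-s1 = s3+s2 from by ring]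
        calc x ^ (-s1) * y ^ (-s2) * z ^ (-s3)
            = x ^ (-s1) * z ^ (-s3) * y ^ (-s2) := by ring
          _ ≤ 2 ^ |s2| * (x ^ (-s1) * z ^ (-(s3+s2))) := hb
          _ ≤ _ := by
              refine mul_le_mul (hcc _ habs2) ?_ (by positivity) (by positivity)
              rw [← e]; linarith
      · have hb := leaf hz hx hy s3 s1 s2 (fun _ => by linarith)
          (fun h => absurd h (not_le.mpr hs2))
        have e : x ^ (-(s1+s2+s3 - max s3 0)) * z ^ (-(max s3 0))
            = x ^ (-(s1+s2)) * z ^ (-s3) := by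
          rw [max_eq_left hs3, show s1+s2+s3-s3 = s1+s2 from by ring]
        calc x ^ (-s1) * y ^ (-s2) * z ^ (-s3)
            = z ^ (-s3) * x ^ (-s1) * y ^ (-s2) := by ring
          _ ≤ 2 ^ |s2| * (z ^ (-s3) * x ^ (-(s1+s2))) := hb
          _ = 2 ^ |s2| * (x ^ (-(s1+s2)) * z ^ (-s3)) := by ring
          _ ≤ _ := by
              refine mul_le_mul (hcc _ habs2) ?_ (by positivity) (by positivity)
              rw [← e]; linarith
  · -- s1 < 0, hence s2 ≥ 0, s3 ≥ 0
    push_neg at hs1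
    have hs2 : 0 ≤ s2 := by linarith
    have hs3 : 0 ≤ s3 := by linarith
    rcases le_total y z with hyz | hzy
    · have hb := leaf hy hz hx s2 s3 s1 (fun _ => by linarith)
        (fun h => absurd h (not_le.mpr hs1))
      have e : y ^ (-(max s2 0)) * z ^ (-(s1+s2+s3 - max s2 0))
          = y ^ (-s2) * z ^ (-(s3+s1)) := by
        rw [max_eq_left hs2, show s1+s2+s3-s2 = s3+s1 from by ring]
      calc x ^ (-s1) * y ^ (-s2) * z ^ (-s3)
          = y ^ (-s2) * z ^ (-s3) * x ^ (-s1) := by ring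
        _ ≤ 2 ^ |s1| * (y ^ (-s2) * z ^ (-(s3+s1))) := hb
        _ ≤ _ := by
            refine mul_le_mul (hcc _ habs1) ?_ (by positivity) (by positivity)
            rw [← e]; linarith
    · have hb := leaf hz hy hx s3 s2 s1 (fun _ => by linarith)
        (fun h => absurd h (not_le.mpr hs1))
      have e : y ^ (-(s1+s2+s3 - max s3 0)) * z ^ (-(max s3 0))
          = y ^ (-(s2+s1)) * z ^ (-s3) := by
        rw [max_eq_left hs3, show s1+s2+s3-s3 = s2+s1 from by ring]
      calc x ^ (-s1) * y ^ (-s2) * z ^ (-s3)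
          = z ^ (-s3) * y ^ (-s2) * x ^ (-s1) := by ring
        _ ≤ 2 ^ |s1| * (z ^ (-s3) * y ^ (-(s2+s1))) := hb
        _ = 2 ^ |s1| * (y ^ (-(s2+s1)) * z ^ (-s3)) := by ring
        _ ≤ _ := by
            refine mul_le_mul (hcc _ habs1) ?_ (by positivity) (by positivity)
            rw [← e]; linarith

lemma summable_invsq_one_add {p : ℝ} (hp : 1/2 < p) :
    Summable (fun n : ℤ => (1 + (n:ℝ)^2) ^ (-p)) := by
  have hg : Summable (fun n : ℤ => (if n = (0:ℤ) then (1:ℝ) else 0) + |(n:ℝ)| ^ (-(2*p))) := by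
    refine Summable.add ?_ (Real.summable_abs_int_rpow (by linarith))
    exact (hasSum_ite_eq (0:ℤ) (1:ℝ)).summable
  refine Summable.of_nonneg_of_le (fun n => Real.rpow_nonneg (by positivity) _) ?_ hg
  intro n
  by_cases hn : n = 0
  · subst hn
    simp only [if_pos rfl, Int.cast_zero, abs_zero]
    rw [Real.zero_rpow (by intro h; nlinarith : -(2*p) ≠ 0)]
    norm_num
  · have hcast : ((n:ℝ)) ≠ 0 := Int.cast_ne_zero.mpr hn
    have hpos : (0:ℝ) < (n:ℝ)^2 := by positivity
    have h1 : (1 + (n:ℝ)^2) ^ (-p) ≤ ((n:ℝ)^2) ^ (-p) :=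
      Real.rpow_le_rpow_of_nonpos hpos (by linarith) (by linarith)
    have h2 : ((n:ℝ)^2) ^ (-p) = |(n:ℝ)| ^ (-(2*p)) := by
      rw [← sq_abs, ← Real.rpow_natCast |(n:ℝ)| 2, ← Real.rpow_mul (abs_nonneg _)]
      norm_num
    rw [if_neg hn]
    rw [h2] at h1
    linarith

def eqv3 : G ≃ ℤ × (ℤ × ℤ) where
  toFun k := (k 0, k 1, k 2)
  invFun p := ![p.1, p.2.1, p.2.2]
  left_inv k := by
    funext i
    fin_cases i <;> rfl
  right_inv p := rfl

lemma summable_phi3 {φ : ℤ → ℝ} (hφ : Summable φ) (hnn : ∀ n, 0 ≤ φ n) :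
    Summable (fun k : G => φ (k 0) * φ (k 1) * φ (k 2)) := by
  have h2 : Summable (fun p : ℤ × ℤ => φ p.1 * φ p.2) :=
    hφ.mul_of_nonneg hφ hnn hnn
  have h3 : Summable (fun p : ℤ × (ℤ × ℤ) => φ p.1 * (φ p.2.1 * φ p.2.2)) :=
    hφ.mul_of_nonneg h2 hnn (fun p => mul_nonneg (hnn _) (hnn _))
  have h4 := (eqv3.summable_iff
    (f := fun p : ℤ × (ℤ × ℤ) => φ p.1 * (φ p.2.1 * φ p.2.2))).mpr h3
  exact h4.congr (fun k => by simp [eqv3, Function.comp, mul_assoc]; rfl)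

lemma summable_wneg_sq (hL : 0 < L) {t : ℝ} (ht : 3/2 < t) :
    Summable (fun k : G => wneg L t k ^ 2) := by
  set φ : ℤ → ℝ := fun n => (1 + (n:ℝ)^2) ^ (-(t/3)) with hφdef
  have hφs : Summable φ := summable_invsq_one_add (by linarith)
  have hnn : ∀ n : ℤ, 0 ≤ φ n := fun n => Real.rpow_nonneg (by positivity) _
  have hmaj : Summable (fun k : G =>
      ((2*π/L)^2)^(-t) * 2^t * (φ (k 0) * φ (k 1) * φ (k 2))) :=
    (summable_phi3 hφs hnn).mul_left _
  refine Summable.of_nonneg_of_le (fun k => sq_nonneg _) ?_ hmaj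
  intro k
  have hcst : (0:ℝ) < ((2*π/L)^2)^(-t) := by
    have : (0:ℝ) < (2*π/L)^2 := by positivity
    positivity
  have h2t : (0:ℝ) < (2:ℝ)^t := by positivity
  by_cases hk : k = 0
  · rw [hk, wneg_zero]
    have : (0:ℝ) ≤ φ ((0:G) 0) * φ ((0:G) 1) * φ ((0:G) 2) := by
      have := hnn ((0:G) 0); have := hnn ((0:G) 1); have := hnn ((0:G) 2)
      positivity
    calc (0:ℝ)^2 = 0 := by norm_num
      _ ≤ _ := mul_nonneg (mul_nonneg hcst.le h2t.le) this
  · rw [wneg_sq hL hk]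
    have hS1 : (1:ℝ) ≤ ∑ i, ((k i:ℝ))^2 := one_le_sumsq hk
    set S := ∑ i, ((k i:ℝ))^2 with hSdef
    have hSpos : (0:ℝ) < S := by linarith
    have hc2 : (0:ℝ) < (2*π/L)^2 := by positivity
    rw [freqSq, Real.mul_rpow hc2.le hSpos.le, mul_assoc]
    refine mul_le_mul_of_nonneg_left ?_ hcst.le
    -- S^(-t) ≤ 2^t * (φ..)
    have step1 : S ^ (-t) ≤ 2^t * (1+S) ^ (-t) := by
      have ha : ((1+S)/2) ≤ S := by linarith
      have h1 : S^(-t) ≤ ((1+S)/2)^(-t) :=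
        Real.rpow_le_rpow_of_nonpos (by linarith) ha (by linarith)
      have h2 : ((1+S)/2)^(-t) = 2^t * (1+S)^(-t) := by
        rw [Real.div_rpow (by linarith) (by norm_num), Real.rpow_neg (by norm_num : (0:ℝ) ≤ 2)]
        field_simp
      linarith [h2 ▸ h1]
    have step2 : (1+S) ^ (-t) ≤ φ (k 0) * φ (k 1) * φ (k 2) := by
      have hSexp : S = ((k 0:ℝ))^2 + ((k 1:ℝ))^2 + ((k 2:ℝ))^2 := by
        rw [hSdef, Fin.sum_univ_three]
      have p0 : (0:ℝ) < 1 + ((k 0:ℝ))^2 := by positivity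
      have p1 : (0:ℝ) < 1 + ((k 1:ℝ))^2 := by positivity
      have p2 : (0:ℝ) < 1 + ((k 2:ℝ))^2 := by positivity
      have hprod : (1+((k 0:ℝ))^2) * (1+((k 1:ℝ))^2) * (1+((k 2:ℝ))^2) ≤ (1+S)^3 := by
        have q0 := sq_nonneg ((k 0:ℝ)); have q1 := sq_nonneg ((k 1:ℝ))
        have q2 := sq_nonneg ((k 2:ℝ))
        have f0 : 1+((k 0:ℝ))^2 ≤ 1+S := by rw [hSexp]; linarith
        have f1 : 1+((k 1:ℝ))^2 ≤ 1+S := by rw [hSexp]; linarith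
        have f2 : 1+((k 2:ℝ))^2 ≤ 1+S := by rw [hSexp]; linarith
        calc (1+((k 0:ℝ))^2) * (1+((k 1:ℝ))^2) * (1+((k 2:ℝ))^2)
            ≤ (1+S) * (1+S) * (1+S) := by
              refine mul_le_mul (mul_le_mul f0 f1 p1.le (by linarith)) f2 p2.le (by nlinarith)
          _ = (1+S)^3 := by ring
      have hkey : (1+S) ^ (-t) = ((1+S)^(3:ℕ)) ^ (-(t/3)) := by
        rw [← Real.rpow_natCast (1+S) 3, ← Real.rpow_mul (by linarith)]
        congr 1
        push_cast
        ring
      rw [hkey, hφdef]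
      calc ((1+S)^(3:ℕ)) ^ (-(t/3))
          ≤ ((1+((k 0:ℝ))^2) * (1+((k 1:ℝ))^2) * (1+((k 2:ℝ))^2)) ^ (-(t/3)) := by
            refine Real.rpow_le_rpow_of_nonpos (by positivity) hprod (by linarith)
        _ = (1+((k 0:ℝ))^2) ^ (-(t/3)) * (1+((k 1:ℝ))^2) ^ (-(t/3))
              * (1+((k 2:ℝ))^2) ^ (-(t/3)) := by
            rw [Real.mul_rpow (by positivity) (by positivity),
              Real.mul_rpow (by positivity) (by positivity)]
    calc S ^ (-t) ≤ 2^t * (1+S)^(-t) := step1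
      _ ≤ 2^t * (φ (k 0) * φ (k 1) * φ (k 2)) :=
          mul_le_mul_of_nonneg_left step2 h2t.le

open scoped ENNReal

/-- ENNReal version of the weight. -/
def W (L t : ℝ) (k : G) : ℝ≥0∞ := ENNReal.ofReal (wneg L t k)

def Zs (L t : ℝ) : ℝ≥0∞ := ∑' k : G, (W L t k) ^ 2

lemma Zs_lt_top (hL : 0 < L) {t : ℝ} (ht : 3/2 < t) : Zs L t < ⊤ := by
  have hs := summable_wneg_sq hL ht
  have : Zs L t = ENNReal.ofReal (∑' k : G, wneg L t k ^ 2) := by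
    rw [ENNReal.ofReal_tsum_of_nonneg (fun k => sq_nonneg _) hs]
    refine tsum_congr fun k => ?_
    rw [W, ← ENNReal.ofReal_pow (wneg_nonneg L t k)]
  rw [this]
  exact ENNReal.ofReal_lt_top

lemma tsum_cs {ι : Type*} [MeasurableSpace ι] [Countable ι] [MeasurableSingletonClass ι]
    (f g : ι → ℝ≥0∞) :
    ∑' i, f i * g i ≤ (∑' i, f i ^ 2) ^ ((1:ℝ)/2) * (∑' i, g i ^ 2) ^ ((1:ℝ)/2) := by
  have hpq : Real.HolderConjugate 2 2 := Real.HolderConjugate.two_two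
  have h := ENNReal.lintegral_mul_le_Lp_mul_Lq (Measure.count : Measure ι) hpq
    (measurable_of_countable f).aemeasurable (measurable_of_countable g).aemeasurable
  simp only [Pi.mul_apply] at h
  rw [lintegral_count] at h
  rw [lintegral_count, lintegral_count] at h
  have h2 : ∀ x : ℝ≥0∞, x ^ (2:ℝ) = x ^ (2:ℕ) := fun x => by
    rw [← ENNReal.rpow_natCast]
    norm_num
  simp only [h2] at h
  exact h

/-- the master bilinear-weight estimate. -/
lemma pairEst (L : ℝ) (hL : 0 < L) (α β : ℝ) (hα : 0 ≤ α) (hβ : 0 ≤ β)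
    (A B C : G → ℝ≥0∞) :
    ∑' p : G × G, W L α p.1 * W L β p.2 * (A p.1 * B p.2 * C (p.1 + p.2)) ≤
      (2 * Zs L (α + β)) ^ ((1:ℝ)/2) *
        ((∑' k : G, (A k)^2) ^ ((1:ℝ)/2) * (∑' k : G, (B k)^2) ^ ((1:ℝ)/2) *
          (∑' k : G, (C k)^2) ^ ((1:ℝ)/2)) := by
  classical
  set f : G → ℝ≥0∞ := fun k => W L α k * A k with hf
  set g : G → ℝ≥0∞ := fun m => W L β m * B m with hg
  set e : G × G ≃ G × G :=
    ⟨fun p => (p.1, p.1 + p.2), fun p => (p.1, p.2 - p.1),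
      fun p => by simp, fun p => by simp⟩ with he
  have step0 : ∑' p : G × G, W L α p.1 * W L β p.2 * (A p.1 * B p.2 * C (p.1 + p.2))
      = ∑' p : G × G, f p.1 * g (p.2 - p.1) * C p.2 := by
    rw [← e.tsum_eq (fun p => f p.1 * g (p.2 - p.1) * C p.2)]
    refine tsum_congr fun p => ?_
    simp only [he, Equiv.coe_fn_mk, add_sub_cancel_left, hf, hg]
    ring
  set h : G → ℝ≥0∞ := fun n => ∑' k : G, f k * g (n - k) with hh
  have step1 : ∑' p : G × G, f p.1 * g (p.2 - p.1) * C p.2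
      = ∑' n : G, h n * C n := by
    rw [ENNReal.tsum_prod']
    rw [ENNReal.tsum_comm]
    refine tsum_congr fun n => ?_
    rw [← ENNReal.tsum_mul_right]
  have hker : ∀ n : G, (∑' k : G, (W L α k * W L β (n - k)) ^ 2) ≤ 2 * Zs L (α + β) := by
    intro n
    have hpt : ∀ k : G, (W L α k * W L β (n - k)) ^ 2
        ≤ (W L (α+β) k) ^ 2 + (W L (α+β) (n-k)) ^ 2 := by
      intro k
      have hreal := wneg_sq_mul_le hL hα hβ k (n - k)
      calc (W L α k * W L β (n - k)) ^ 2
          = ENNReal.ofReal (wneg L α k ^ 2 * wneg L β (n-k) ^ 2) := by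
            rw [W, W, mul_pow, ← ENNReal.ofReal_pow (wneg_nonneg _ _ _),
              ← ENNReal.ofReal_pow (wneg_nonneg _ _ _),
              ← ENNReal.ofReal_mul (sq_nonneg _)]
        _ ≤ ENNReal.ofReal (wneg L (α+β) k ^ 2 + wneg L (α+β) (n-k) ^ 2) :=
            ENNReal.ofReal_le_ofReal hreal
        _ = (W L (α+β) k) ^ 2 + (W L (α+β) (n-k)) ^ 2 := by
            rw [ENNReal.ofReal_add (sq_nonneg _) (sq_nonneg _), W, W,
              ENNReal.ofReal_pow (wneg_nonneg _ _ _), ENNReal.ofReal_pow (wneg_nonneg _ _ _)]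
    calc (∑' k : G, (W L α k * W L β (n - k)) ^ 2)
        ≤ ∑' k : G, ((W L (α+β) k) ^ 2 + (W L (α+β) (n-k)) ^ 2) := ENNReal.tsum_le_tsum hpt
      _ = Zs L (α+β) + ∑' k : G, (W L (α+β) (n-k)) ^ 2 := by
          rw [ENNReal.tsum_add]; rfl
      _ = Zs L (α+β) + Zs L (α+β) := by
          congr 1
          exact (Equiv.subLeft n).tsum_eq (fun j => (W L (α+β) j) ^ 2)
      _ = 2 * Zs L (α+β) := by ring
  have hsqb : ∀ n : G, h n ^ 2 ≤ (2 * Zs L (α+β)) * ∑' k : G, (A k)^2 * (B (n-k))^2 := by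
    intro n
    have hcs : h n ≤ (∑' k : G, (W L α k * W L β (n - k)) ^ 2) ^ ((1:ℝ)/2) *
        (∑' k : G, (A k * B (n-k)) ^ 2) ^ ((1:ℝ)/2) := by
      rw [hh]
      calc (∑' k : G, f k * g (n - k))
          = ∑' k : G, (W L α k * W L β (n - k)) * (A k * B (n-k)) := by
            refine tsum_congr fun k => ?_
            simp only [hf, hg]
            ring
        _ ≤ _ := tsum_cs _ _
    have h2 : h n ≤ ((2 * Zs L (α+β)) * ∑' k : G, (A k)^2 * (B (n-k))^2) ^ ((1:ℝ)/2) := by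
      refine hcs.trans ?_
      rw [ENNReal.mul_rpow_of_nonneg _ _ (by norm_num : (0:ℝ) ≤ 1/2)]
      refine mul_le_mul' (ENNReal.rpow_le_rpow (hker n) (by norm_num)) ?_
      refine ENNReal.rpow_le_rpow ?_ (by norm_num)
      refine le_of_eq (tsum_congr fun k => ?_)
      rw [mul_pow]
    calc h n ^ 2 ≤ (((2 * Zs L (α+β)) * ∑' k : G, (A k)^2 * (B (n-k))^2) ^ ((1:ℝ)/2)) ^ 2 :=
          pow_le_pow_left' h2 2
      _ = (2 * Zs L (α+β)) * ∑' k : G, (A k)^2 * (B (n-k))^2 := by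
          rw [← ENNReal.rpow_natCast (_ ^ ((1:ℝ)/2)) 2, ← ENNReal.rpow_mul]
          norm_num
  have hsum2 : ∑' n : G, h n ^ 2 ≤ (2 * Zs L (α+β)) * ((∑' k : G, (A k)^2) * (∑' k : G, (B k)^2)) := by
    calc ∑' n : G, h n ^ 2
        ≤ ∑' n : G, (2 * Zs L (α+β)) * ∑' k : G, (A k)^2 * (B (n-k))^2 :=
          ENNReal.tsum_le_tsum hsqb
      _ = (2 * Zs L (α+β)) * ∑' n : G, ∑' k : G, (A k)^2 * (B (n-k))^2 := ENNReal.tsum_mul_left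
      _ = (2 * Zs L (α+β)) * ((∑' k : G, (A k)^2) * (∑' k : G, (B k)^2)) := by
          congr 1
          rw [ENNReal.tsum_comm]
          calc ∑' k : G, ∑' n : G, (A k)^2 * (B (n-k))^2
              = ∑' k : G, (A k)^2 * ∑' n : G, (B (n-k))^2 := by
                refine tsum_congr fun k => ?_
                rw [ENNReal.tsum_mul_left]
            _ = ∑' k : G, (A k)^2 * ∑' j : G, (B j)^2 := by
                refine tsum_congr fun k => ?_
                congr 1
                exact (Equiv.subRight k).tsum_eq (fun j => (B j) ^ 2)
            _ = (∑' k : G, (A k)^2) * (∑' k : G, (B k)^2) := ENNReal.tsum_mul_right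
  calc ∑' p : G × G, W L α p.1 * W L β p.2 * (A p.1 * B p.2 * C (p.1 + p.2))
      = ∑' n : G, h n * C n := by rw [step0, step1]
    _ ≤ (∑' n : G, h n ^ 2) ^ ((1:ℝ)/2) * (∑' n : G, (C n)^2) ^ ((1:ℝ)/2) := tsum_cs _ _
    _ ≤ ((2 * Zs L (α+β)) * ((∑' k : G, (A k)^2) * (∑' k : G, (B k)^2))) ^ ((1:ℝ)/2)
          * (∑' n : G, (C n)^2) ^ ((1:ℝ)/2) := by
        refine mul_le_mul' (ENNReal.rpow_le_rpow hsum2 (by norm_num)) le_rfl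
    _ = (2 * Zs L (α + β)) ^ ((1:ℝ)/2) *
        ((∑' k : G, (A k)^2) ^ ((1:ℝ)/2) * (∑' k : G, (B k)^2) ^ ((1:ℝ)/2) *
          (∑' k : G, (C k)^2) ^ ((1:ℝ)/2)) := by
        rw [ENNReal.mul_rpow_of_nonneg _ _ (by norm_num : (0:ℝ) ≤ 1/2),
          ENNReal.mul_rpow_of_nonneg _ _ (by norm_num : (0:ℝ) ≤ 1/2),
          ENNReal.mul_rpow_of_nonneg _ _ (by norm_num : (0:ℝ) ≤ 1/2)]
        ring

lemma W_neg (L t : ℝ) (k : G) : W L t (-k) = W L t k := by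
  unfold W
  rw [wneg_neg]

lemma pairEst' (L : ℝ) (hL : 0 < L) (α β : ℝ) (hα : 0 ≤ α) (hβ : 0 ≤ β)
    (X Y Z : G → ℝ≥0∞) :
    ∑' p : G × G, W L α p.1 * W L β (p.1 + p.2) * (X p.1 * Y p.2 * Z (p.1 + p.2)) ≤
      (2 * Zs L (α + β)) ^ ((1:ℝ)/2) *
        ((∑' k : G, (X k)^2) ^ ((1:ℝ)/2) * (∑' k : G, (Y k)^2) ^ ((1:ℝ)/2) *
          (∑' k : G, (Z k)^2) ^ ((1:ℝ)/2)) := by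
  classical
  set e : G × G ≃ G × G :=
    ⟨fun p => (-p.1, p.1 + p.2), fun p => (-p.1, p.2 + p.1),
      fun p => by simp, fun p => by simp⟩ with he
  have step : ∑' p : G × G, W L α p.1 * W L β (p.1 + p.2) * (X p.1 * Y p.2 * Z (p.1 + p.2))
      = ∑' p : G × G, W L α p.1 * W L β p.2 * (X (-p.1) * Z p.2 * Y (p.1 + p.2)) := by
    rw [← e.tsum_eq (fun p => W L α p.1 * W L β p.2 * (X (-p.1) * Z p.2 * Y (p.1 + p.2)))]
    refine tsum_congr fun p => ?_
    simp only [he, Equiv.coe_fn_mk, neg_neg]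
    rw [W_neg, show -p.1 + (p.1 + p.2) = p.2 from by abel]
    ring
  rw [step]
  have hmain := pairEst L hL α β hα hβ (fun k => X (-k)) Z Y
  have hXnorm : (∑' k : G, (X (-k))^2) = ∑' k : G, (X k)^2 :=
    (Equiv.neg G).tsum_eq (fun j => (X j) ^ 2)
  rw [hXnorm] at hmain
  refine hmain.trans (le_of_eq ?_)
  ring

lemma pairEst'' (L : ℝ) (hL : 0 < L) (α β : ℝ) (hα : 0 ≤ α) (hβ : 0 ≤ β)
    (X Y Z : G → ℝ≥0∞) :
    ∑' p : G × G, W L α p.2 * W L β (p.1 + p.2) * (X p.1 * Y p.2 * Z (p.1 + p.2)) ≤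
      (2 * Zs L (α + β)) ^ ((1:ℝ)/2) *
        ((∑' k : G, (X k)^2) ^ ((1:ℝ)/2) * (∑' k : G, (Y k)^2) ^ ((1:ℝ)/2) *
          (∑' k : G, (Z k)^2) ^ ((1:ℝ)/2)) := by
  have step : ∑' p : G × G, W L α p.2 * W L β (p.1 + p.2) * (X p.1 * Y p.2 * Z (p.1 + p.2))
      = ∑' p : G × G, W L α p.1 * W L β (p.1 + p.2) * (Y p.1 * X p.2 * Z (p.1 + p.2)) := by
    rw [← (Equiv.prodComm G G).tsum_eq
      (fun p : G × G => W L α p.1 * W L β (p.1 + p.2) * (Y p.1 * X p.2 * Z (p.1 + p.2)))]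
    refine tsum_congr fun p => ?_
    simp only [Equiv.prodComm_apply, Prod.fst_swap, Prod.snd_swap]
    rw [show p.2 + p.1 = p.1 + p.2 from add_comm _ _]
    ring
  rw [step]
  have hmain := pairEst' L hL α β hα hβ Y X Z
  refine hmain.trans (le_of_eq ?_)
  ring

lemma wt_nonneg (L s : ℝ) (k : G) : 0 ≤ wt L s k := by
  unfold wt
  split
  · exact le_refl 0
  · exact Real.rpow_nonneg (freqSq_nonneg L k) _

lemma wt_neg (L s : ℝ) (k : G) : wt L s (-k) = wt L s k := by
  unfold wt
  simp only [freqSq_neg, neg_eq_zero]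

lemma coefSq_nonneg (u : Coeffs) (k : G) : 0 ≤ coefSq u k :=
  Finset.sum_nonneg fun _ _ => sq_nonneg _

lemma wneg_eq_sqrt (hL : 0 < L) {a : ℝ} {k : G} (hk : k ≠ 0) :
    wneg L a k = Real.sqrt (freqSq L k) ^ (-a) := by
  have hQ := (freqSq_pos hL hk).le
  rw [wneg, if_neg hk, Real.sqrt_eq_rpow, ← Real.rpow_mul hQ]
  congr 1
  ring

lemma decomp_gen (hL : 0 < L) {s : ℝ} {k : G} (hk : k ≠ 0) {cX : ℝ} (hcX : 0 ≤ cX) :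
    Real.sqrt cX = Real.sqrt (freqSq L k) ^ (-s) * Real.sqrt (wt L s k * cX) := by
  have hQ := freqSq_pos hL hk
  rw [wt, if_neg hk, Real.sqrt_mul (Real.rpow_nonneg hQ.le _),
    Real.sqrt_eq_rpow (freqSq L k ^ s), ← Real.rpow_mul hQ.le,
    Real.sqrt_eq_rpow (freqSq L k), ← Real.rpow_mul hQ.le, ← mul_assoc,
    ← Real.rpow_add hQ]
  rw [show (1:ℝ)/2 * -s + s * (1/2) = 0 from by ring, Real.rpow_zero, one_mul]

lemma decomp_v (hL : 0 < L) {s : ℝ} {m : G} (hm : m ≠ 0) {cX : ℝ} (hcX : 0 ≤ cX) :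
    Real.sqrt (freqSq L m) * Real.sqrt cX
      = Real.sqrt (freqSq L m) ^ (-s) * Real.sqrt (wt L (s+1) m * cX) := by
  have hQ := freqSq_pos hL hm
  rw [wt, if_neg hm, Real.sqrt_mul (Real.rpow_nonneg hQ.le _),
    Real.sqrt_eq_rpow (freqSq L m ^ (s+1)), ← Real.rpow_mul hQ.le,
    Real.sqrt_eq_rpow (freqSq L m), ← Real.rpow_mul hQ.le, ← mul_assoc,
    ← Real.rpow_add hQ]
  rw [show (1:ℝ)/2 * -s + (s+1) * (1/2) = 1/2 from by ring]

lemma abs_term_le (hL : 0 < L) (u v w : Coeffs) (k m : G) :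
    norm (∑ i, ∑ j,
        u k j * (Complex.I * ((2 * π / L : ℝ) : ℂ) * ((m j : ℤ) : ℂ)) * v m i *
          w (-(k + m)) i)
      ≤ Real.sqrt (coefSq u k) * (Real.sqrt (freqSq L m) * Real.sqrt (coefSq v m)) *
          Real.sqrt (coefSq w (-(k + m))) := by
  have hfac : (∑ i, ∑ j,
        u k j * (Complex.I * ((2 * π / L : ℝ) : ℂ) * ((m j : ℤ) : ℂ)) * v m i *
          w (-(k + m)) i)
      = (∑ j, u k j * (Complex.I * ((2 * π / L : ℝ) : ℂ) * ((m j : ℤ) : ℂ)))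
        * (∑ i, v m i * w (-(k + m)) i) := by
    rw [Finset.sum_mul_sum, Finset.sum_comm]
    exact Finset.sum_congr rfl fun i _ => Finset.sum_congr rfl fun j _ => by ring
  rw [hfac, norm_mul]
  have h2πL : (0:ℝ) < 2 * π / L := by positivity
  have hfirst : norm (∑ j, u k j * (Complex.I * ((2 * π / L : ℝ) : ℂ) * ((m j : ℤ) : ℂ)))
      ≤ Real.sqrt (coefSq u k) * Real.sqrt (freqSq L m) := by
    calc norm (∑ j, u k j * (Complex.I * ((2 * π / L : ℝ) : ℂ) * ((m j : ℤ) : ℂ)))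
        ≤ ∑ j, norm (u k j * (Complex.I * ((2 * π / L : ℝ) : ℂ) * ((m j : ℤ) : ℂ))) := by
          exact norm_sum_le _ _
      _ = ∑ j, norm (u k j) * ((2 * π / L) * |((m j : ℤ) : ℝ)|) := by
          refine Finset.sum_congr rfl fun j _ => ?_
          rw [norm_mul, norm_mul, norm_mul, Complex.norm_I, Complex.norm_real, Real.norm_eq_abs,
            Complex.norm_intCast, abs_of_pos h2πL, one_mul]
      _ = (2 * π / L) * ∑ j, norm (u k j) * |((m j : ℤ) : ℝ)| := by
          rw [Finset.mul_sum]
          exact Finset.sum_congr rfl fun j _ => by ring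
      _ ≤ (2 * π / L) * (Real.sqrt (∑ j, norm (u k j) ^ 2)
            * Real.sqrt (∑ j, |((m j : ℤ) : ℝ)| ^ 2)) :=
          mul_le_mul_of_nonneg_left (Real.sum_mul_le_sqrt_mul_sqrt _ _ _) h2πL.le
      _ = Real.sqrt (coefSq u k) * ((2 * π / L) * Real.sqrt (∑ j, ((m j : ℤ) : ℝ) ^ 2)) := by
          rw [show (∑ j, |((m j : ℤ) : ℝ)| ^ 2) = ∑ j, ((m j : ℤ) : ℝ) ^ 2 from
            Finset.sum_congr rfl fun j _ => sq_abs _]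
          rw [coefSq]
          ring
      _ = Real.sqrt (coefSq u k) * Real.sqrt (freqSq L m) := by
          rw [← sqrt_freqSq_eq hL]
  have hsecond : norm (∑ i, v m i * w (-(k + m)) i)
      ≤ Real.sqrt (coefSq v m) * Real.sqrt (coefSq w (-(k + m))) := by
    calc norm (∑ i, v m i * w (-(k + m)) i)
        ≤ ∑ i, norm (v m i * w (-(k + m)) i) := norm_sum_le _ _
      _ = ∑ i, norm (v m i) * norm (w (-(k + m)) i) := by
          refine Finset.sum_congr rfl fun i _ => norm_mul _ _
      _ ≤ Real.sqrt (∑ i, norm (v m i) ^ 2)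
            * Real.sqrt (∑ i, norm (w (-(k + m)) i) ^ 2) :=
          Real.sum_mul_le_sqrt_mul_sqrt _ _ _
      _ = Real.sqrt (coefSq v m) * Real.sqrt (coefSq w (-(k + m))) := rfl
  calc norm (∑ j, u k j * (Complex.I * ((2 * π / L : ℝ) : ℂ) * ((m j : ℤ) : ℂ)))
        * norm (∑ i, v m i * w (-(k + m)) i)
      ≤ (Real.sqrt (coefSq u k) * Real.sqrt (freqSq L m))
          * (Real.sqrt (coefSq v m) * Real.sqrt (coefSq w (-(k + m)))) :=
        mul_le_mul hfirst hsecond (norm_nonneg _)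
          (mul_nonneg (Real.sqrt_nonneg _) (Real.sqrt_nonneg _))
    _ = _ := by ring

/-- the product of the three weighted coefficient norms. -/
def DD (L s1 s2 s3 : ℝ) (u v w : Coeffs) (k m : G) : ℝ :=
  Real.sqrt (wt L s1 k * coefSq u k) * Real.sqrt (wt L (s2+1) m * coefSq v m)
    * Real.sqrt (wt L s3 (k+m) * coefSq w (-(k+m)))

lemma DD_nonneg (L s1 s2 s3 : ℝ) (u v w : Coeffs) (k m : G) :
    0 ≤ DD L s1 s2 s3 u v w k m :=
  mul_nonneg (mul_nonneg (Real.sqrt_nonneg _) (Real.sqrt_nonneg _)) (Real.sqrt_nonneg _)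

lemma master_pointwise (hL : 0 < L) (s1 s2 s3 : ℝ)
    (h12 : 0 ≤ s1+s2) (h13 : 0 ≤ s1+s3) (h23 : 0 ≤ s2+s3)
    (u v w : Coeffs) (hu0 : u 0 = 0) (hw0 : w 0 = 0) (k m : G) :
    norm (∑ i, ∑ j,
        u k j * (Complex.I * ((2 * π / L : ℝ) : ℂ) * ((m j : ℤ) : ℂ)) * v m i *
          w (-(k + m)) i)
      ≤ (2:ℝ) ^ (|s1|+|s2|+|s3|) *
        (wneg L (max s1 0) k * wneg L (s1+s2+s3 - max s1 0) m * DD L s1 s2 s3 u v w k m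
        + wneg L (s1+s2+s3 - max s2 0) k * wneg L (max s2 0) m * DD L s1 s2 s3 u v w k m
        + wneg L (s1+s2+s3 - max s3 0) k * wneg L (max s3 0) (k+m) * DD L s1 s2 s3 u v w k m
        + wneg L (max s1 0) k * wneg L (s1+s2+s3 - max s1 0) (k+m) * DD L s1 s2 s3 u v w k m
        + wneg L (max s2 0) m * wneg L (s1+s2+s3 - max s2 0) (k+m) * DD L s1 s2 s3 u v w k m
        + wneg L (s1+s2+s3 - max s3 0) m * wneg L (max s3 0) (k+m) * DD L s1 s2 s3 u v w k m) := by
  have hD : 0 ≤ DD L s1 s2 s3 u v w k m := DD_nonneg _ _ _ _ _ _ _ _ _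
  have hτ : ∀ a b : ℝ, ∀ k' m' : G,
      0 ≤ wneg L a k' * wneg L b m' * DD L s1 s2 s3 u v w k m :=
    fun a b k' m' => mul_nonneg (mul_nonneg (wneg_nonneg _ _ _) (wneg_nonneg _ _ _)) hD
  have hc0 : (0:ℝ) ≤ (2:ℝ) ^ (|s1|+|s2|+|s3|) := Real.rpow_nonneg (by norm_num) _
  have hRHS : 0 ≤ (2:ℝ) ^ (|s1|+|s2|+|s3|) *
        (wneg L (max s1 0) k * wneg L (s1+s2+s3 - max s1 0) m * DD L s1 s2 s3 u v w k m
        + wneg L (s1+s2+s3 - max s2 0) k * wneg L (max s2 0) m * DD L s1 s2 s3 u v w k m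
        + wneg L (s1+s2+s3 - max s3 0) k * wneg L (max s3 0) (k+m) * DD L s1 s2 s3 u v w k m
        + wneg L (max s1 0) k * wneg L (s1+s2+s3 - max s1 0) (k+m) * DD L s1 s2 s3 u v w k m
        + wneg L (max s2 0) m * wneg L (s1+s2+s3 - max s2 0) (k+m) * DD L s1 s2 s3 u v w k m
        + wneg L (s1+s2+s3 - max s3 0) m * wneg L (max s3 0) (k+m) * DD L s1 s2 s3 u v w k m) := by
    have := hτ (max s1 0) (s1+s2+s3 - max s1 0) k m
    have := hτ (s1+s2+s3 - max s2 0) (max s2 0) k m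
    have := hτ (s1+s2+s3 - max s3 0) (max s3 0) k (k+m)
    have := hτ (max s1 0) (s1+s2+s3 - max s1 0) k (k+m)
    have := hτ (max s2 0) (s1+s2+s3 - max s2 0) m (k+m)
    have := hτ (s1+s2+s3 - max s3 0) (max s3 0) m (k+m)
    have h6 : 0 ≤ wneg L (max s1 0) k * wneg L (s1+s2+s3 - max s1 0) m * DD L s1 s2 s3 u v w k m
        + wneg L (s1+s2+s3 - max s2 0) k * wneg L (max s2 0) m * DD L s1 s2 s3 u v w k m
        + wneg L (s1+s2+s3 - max s3 0) k * wneg L (max s3 0) (k+m) * DD L s1 s2 s3 u v w k m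
        + wneg L (max s1 0) k * wneg L (s1+s2+s3 - max s1 0) (k+m) * DD L s1 s2 s3 u v w k m
        + wneg L (max s2 0) m * wneg L (s1+s2+s3 - max s2 0) (k+m) * DD L s1 s2 s3 u v w k m
        + wneg L (s1+s2+s3 - max s3 0) m * wneg L (max s3 0) (k+m) * DD L s1 s2 s3 u v w k m := by
      linarith
    exact mul_nonneg hc0 h6
  by_cases hk : k = 0
  · rw [hk, hu0]
    simp only [Pi.zero_apply, zero_mul, Finset.sum_const_zero, norm_zero]
    rw [hk] at hRHS
    exact hRHS
  by_cases hm : m = 0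
  · rw [hm]
    simp only [Pi.zero_apply, Int.cast_zero, mul_zero, zero_mul, Finset.sum_const_zero, norm_zero]
    rw [hm] at hRHS
    exact hRHS
  by_cases hkm : k + m = 0
  · rw [hkm]
    simp only [neg_zero, hw0, Pi.zero_apply, mul_zero, Finset.sum_const_zero, norm_zero]
    rw [hkm] at hRHS
    exact hRHS
  · have hx : 0 < Real.sqrt (freqSq L k) := Real.sqrt_pos.mpr (freqSq_pos hL hk)
    have hy : 0 < Real.sqrt (freqSq L m) := Real.sqrt_pos.mpr (freqSq_pos hL hm)
    have hz : 0 < Real.sqrt (freqSq L (k+m)) := Real.sqrt_pos.mpr (freqSq_pos hL hkm)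
    have hzxy : Real.sqrt (freqSq L (k+m))
        ≤ Real.sqrt (freqSq L k) + Real.sqrt (freqSq L m) := sqrt_freqSq_triangle hL k m
    have hxyz : Real.sqrt (freqSq L k)
        ≤ Real.sqrt (freqSq L m) + Real.sqrt (freqSq L (k+m)) := by
      have h := sqrt_freqSq_triangle hL (k+m) (-m)
      rw [show k + m + -m = k from by abel, freqSq_neg] at h
      linarith
    have hyxz : Real.sqrt (freqSq L m)
        ≤ Real.sqrt (freqSq L k) + Real.sqrt (freqSq L (k+m)) := by
      have h := sqrt_freqSq_triangle hL (-k) (k+m)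
      rw [show -k + (k + m) = m from by abel, freqSq_neg] at h
      linarith
    have htri := tri_pointwise s1 s2 s3 h12 h13 h23 hx hy hz hzxy hxyz hyxz
    have hdec : Real.sqrt (coefSq u k)
          * (Real.sqrt (freqSq L m) * Real.sqrt (coefSq v m))
          * Real.sqrt (coefSq w (-(k+m)))
        = (Real.sqrt (freqSq L k) ^ (-s1) * Real.sqrt (freqSq L m) ^ (-s2)
            * Real.sqrt (freqSq L (k+m)) ^ (-s3)) * DD L s1 s2 s3 u v w k m := by
      rw [DD]
      rw [decomp_gen hL hk (coefSq_nonneg u k) (s := s1),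
        decomp_v hL hm (coefSq_nonneg v m) (s := s2),
        decomp_gen hL hkm (coefSq_nonneg w (-(k+m))) (s := s3)]
      ring
    calc norm (∑ i, ∑ j,
        u k j * (Complex.I * ((2 * π / L : ℝ) : ℂ) * ((m j : ℤ) : ℂ)) * v m i *
          w (-(k + m)) i)
        ≤ Real.sqrt (coefSq u k) * (Real.sqrt (freqSq L m) * Real.sqrt (coefSq v m))
            * Real.sqrt (coefSq w (-(k+m))) := abs_term_le hL u v w k m
      _ = (Real.sqrt (freqSq L k) ^ (-s1) * Real.sqrt (freqSq L m) ^ (-s2)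
            * Real.sqrt (freqSq L (k+m)) ^ (-s3)) * DD L s1 s2 s3 u v w k m := hdec
      _ ≤ ((2:ℝ) ^ (|s1|+|s2|+|s3|) *
            (Real.sqrt (freqSq L k) ^ (-(max s1 0))
              * Real.sqrt (freqSq L m) ^ (-(s1+s2+s3 - max s1 0))
            + Real.sqrt (freqSq L k) ^ (-(s1+s2+s3 - max s2 0))
              * Real.sqrt (freqSq L m) ^ (-(max s2 0))
            + Real.sqrt (freqSq L k) ^ (-(s1+s2+s3 - max s3 0))
              * Real.sqrt (freqSq L (k+m)) ^ (-(max s3 0))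
            + Real.sqrt (freqSq L k) ^ (-(max s1 0))
              * Real.sqrt (freqSq L (k+m)) ^ (-(s1+s2+s3 - max s1 0))
            + Real.sqrt (freqSq L m) ^ (-(max s2 0))
              * Real.sqrt (freqSq L (k+m)) ^ (-(s1+s2+s3 - max s2 0))
            + Real.sqrt (freqSq L m) ^ (-(s1+s2+s3 - max s3 0))
              * Real.sqrt (freqSq L (k+m)) ^ (-(max s3 0)))) * DD L s1 s2 s3 u v w k m :=
          mul_le_mul_of_nonneg_right htri hD
      _ = _ := by
          simp only [wneg_eq_sqrt hL hk, wneg_eq_sqrt hL hm, wneg_eq_sqrt hL hkm]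
          ring

end TriEst

end
/-- the trilinear form `b` extends continuously to
`V^{s₁} × V^{s₂+1} × V^{s₃}` when `sᵢ + sⱼ ≥ 0` for `i ≠ j` and `s₁+s₂+s₃ > 3/2`. -/
theorem trilinear_estimate (L : ℝ) (hL : 0 < L) (s1 s2 s3 : ℝ)
    (h12 : 0 ≤ s1 + s2) (h13 : 0 ≤ s1 + s3) (h23 : 0 ≤ s2 + s3)
    (hsum : 3/2 < s1 + s2 + s3) :
    ∃ c > 0, ∀ u v w : Coeffs, MemV L s1 u → MemV L (s2 + 1) v → MemV L s3 w →
      (Summable fun p : (Fin 3 → ℤ) × (Fin 3 → ℤ) =>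
        norm (∑ i, ∑ j,
          u p.1 j * (Complex.I * ((2 * π / L : ℝ) : ℂ) * ((p.2 j : ℤ) : ℂ)) * v p.2 i *
            w (-(p.1 + p.2)) i)) ∧
      |bform L u v w| ≤ c * Vnorm L s1 u * Vnorm L (s2 + 1) v * Vnorm L s3 w := by
  classical
  have hr : (3:ℝ)/2 < s1 + s2 + s3 := hsum
  set r : ℝ := s1 + s2 + s3 with hrdef
  have he1a : 0 ≤ max s1 0 := le_max_right _ _
  have he2a : 0 ≤ max s2 0 := le_max_right _ _
  have he3a : 0 ≤ max s3 0 := le_max_right _ _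
  have he1b : 0 ≤ r - max s1 0 := by
    rcases max_choice s1 0 with h | h <;> rw [h] <;> [linarith; linarith]
  have he2b : 0 ≤ r - max s2 0 := by
    rcases max_choice s2 0 with h | h <;> rw [h] <;> [linarith; linarith]
  have he3b : 0 ≤ r - max s3 0 := by
    rcases max_choice s3 0 with h | h <;> rw [h] <;> [linarith; linarith]
  have hZ : TriEst.Zs L r < ⊤ := TriEst.Zs_lt_top hL hr
  set KK : ENNReal := (2 * TriEst.Zs L r) ^ ((1:ℝ)/2) with hKKdef
  have hKKtop : KK ≠ ⊤ := by
    refine (ENNReal.rpow_lt_top_of_nonneg (by norm_num) ?_).ne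
    exact ENNReal.mul_ne_top (by norm_num) hZ.ne
  set c₀ : ℝ := (2:ℝ) ^ (|s1|+|s2|+|s3|) with hc₀def
  have hc₀pos : 0 < c₀ := Real.rpow_pos_of_pos (by norm_num) _
  set Kop : ℝ := KK.toReal with hKopdef
  have hKopnn : 0 ≤ Kop := ENNReal.toReal_nonneg
  have hL3 : (0:ℝ) < L ^ 3 := pow_pos hL 3
  refine ⟨L^3 * (c₀ * (6 * (Kop + 1))), by positivity, fun u v w hu hv hw => ?_⟩
  set NV1 : ℝ := Vnorm L s1 u with hNV1def
  set NV2 : ℝ := Vnorm L (s2+1) v with hNV2def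
  set NV3 : ℝ := Vnorm L s3 w with hNV3def
  have hNV1nn : 0 ≤ NV1 := Real.sqrt_nonneg _
  have hNV2nn : 0 ≤ NV2 := Real.sqrt_nonneg _
  have hNV3nn : 0 ≤ NV3 := Real.sqrt_nonneg _
  set 𝔄 : TriEst.G → ENNReal :=
    fun k => ENNReal.ofReal (Real.sqrt (wt L s1 k * coefSq u k)) with h𝔄def
  set 𝔅 : TriEst.G → ENNReal :=
    fun m => ENNReal.ofReal (Real.sqrt (wt L (s2+1) m * coefSq v m)) with h𝔅def
  set ℭ : TriEst.G → ENNReal :=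
    fun n => ENNReal.ofReal (Real.sqrt (wt L s3 n * coefSq w (-n))) with hℭdef
  have hNA : (∑' k : TriEst.G, (𝔄 k)^2) = ENNReal.ofReal (VnormSq L s1 u) := by
    rw [VnormSq, ENNReal.ofReal_tsum_of_nonneg
      (fun k => mul_nonneg (TriEst.wt_nonneg _ _ _) (TriEst.coefSq_nonneg _ _)) hu.summable]
    refine tsum_congr fun k => ?_
    rw [h𝔄def, ← ENNReal.ofReal_pow (Real.sqrt_nonneg _),
      Real.sq_sqrt (mul_nonneg (TriEst.wt_nonneg _ _ _) (TriEst.coefSq_nonneg _ _))]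
  have hNB : (∑' k : TriEst.G, (𝔅 k)^2) = ENNReal.ofReal (VnormSq L (s2+1) v) := by
    rw [VnormSq, ENNReal.ofReal_tsum_of_nonneg
      (fun k => mul_nonneg (TriEst.wt_nonneg _ _ _) (TriEst.coefSq_nonneg _ _)) hv.summable]
    refine tsum_congr fun k => ?_
    rw [h𝔅def, ← ENNReal.ofReal_pow (Real.sqrt_nonneg _),
      Real.sq_sqrt (mul_nonneg (TriEst.wt_nonneg _ _ _) (TriEst.coefSq_nonneg _ _))]
  have hNC : (∑' k : TriEst.G, (ℭ k)^2) = ENNReal.ofReal (VnormSq L s3 w) := by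
    have h1 : ∀ n : TriEst.G, (ℭ n)^2 = ENNReal.ofReal (wt L s3 (-n) * coefSq w (-n)) := by
      intro n
      rw [hℭdef, ← ENNReal.ofReal_pow (Real.sqrt_nonneg _),
        Real.sq_sqrt (mul_nonneg (TriEst.wt_nonneg _ _ _) (TriEst.coefSq_nonneg _ _)),
        TriEst.wt_neg]
    calc (∑' n : TriEst.G, (ℭ n)^2)
        = ∑' n : TriEst.G, ENNReal.ofReal (wt L s3 (-n) * coefSq w (-n)) := tsum_congr h1
      _ = ∑' n : TriEst.G, ENNReal.ofReal (wt L s3 n * coefSq w n) :=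
          (Equiv.neg (TriEst.G)).tsum_eq (fun j => ENNReal.ofReal (wt L s3 j * coefSq w j))
      _ = ENNReal.ofReal (VnormSq L s3 w) := by
          rw [VnormSq, ENNReal.ofReal_tsum_of_nonneg
            (fun k => mul_nonneg (TriEst.wt_nonneg _ _ _) (TriEst.coefSq_nonneg _ _))
            hw.summable]
  have hnA : (∑' k : TriEst.G, (𝔄 k)^2) ^ ((1:ℝ)/2) = ENNReal.ofReal NV1 := by
    have hVnn : 0 ≤ VnormSq L s1 u := tsum_nonneg fun k =>
      mul_nonneg (TriEst.wt_nonneg _ _ _) (TriEst.coefSq_nonneg _ _)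
    rw [hNA, ENNReal.ofReal_rpow_of_nonneg hVnn (by norm_num), hNV1def]
    simp only [Vnorm, Real.sqrt_eq_rpow]
  have hnB : (∑' k : TriEst.G, (𝔅 k)^2) ^ ((1:ℝ)/2) = ENNReal.ofReal NV2 := by
    have hVnn : 0 ≤ VnormSq L (s2+1) v := tsum_nonneg fun k =>
      mul_nonneg (TriEst.wt_nonneg _ _ _) (TriEst.coefSq_nonneg _ _)
    rw [hNB, ENNReal.ofReal_rpow_of_nonneg hVnn (by norm_num), hNV2def]
    simp only [Vnorm, Real.sqrt_eq_rpow]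
  have hnC : (∑' k : TriEst.G, (ℭ k)^2) ^ ((1:ℝ)/2) = ENNReal.ofReal NV3 := by
    have hVnn : 0 ≤ VnormSq L s3 w := tsum_nonneg fun k =>
      mul_nonneg (TriEst.wt_nonneg _ _ _) (TriEst.coefSq_nonneg _ _)
    rw [hNC, ENNReal.ofReal_rpow_of_nonneg hVnn (by norm_num), hNV3def]
    simp only [Vnorm, Real.sqrt_eq_rpow]
  set Φ : (Fin 3 → ℤ) × (Fin 3 → ℤ) → ℝ := fun p => norm (∑ i, ∑ j,
      u p.1 j * (Complex.I * ((2 * π / L : ℝ) : ℂ) * ((p.2 j : ℤ) : ℂ)) * v p.2 i *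
        w (-(p.1 + p.2)) i) with hΦdef
  have hΦnn : ∀ p, 0 ≤ Φ p := fun p => norm_nonneg _
  -- ENNReal-level bound
  set t1 : TriEst.G × TriEst.G → ENNReal := fun p =>
    TriEst.W L (max s1 0) p.1 * TriEst.W L (r - max s1 0) p.2
      * (𝔄 p.1 * 𝔅 p.2 * ℭ (p.1+p.2)) with ht1def
  set t2 : TriEst.G × TriEst.G → ENNReal := fun p =>
    TriEst.W L (r - max s2 0) p.1 * TriEst.W L (max s2 0) p.2
      * (𝔄 p.1 * 𝔅 p.2 * ℭ (p.1+p.2)) with ht2def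
  set t3 : TriEst.G × TriEst.G → ENNReal := fun p =>
    TriEst.W L (r - max s3 0) p.1 * TriEst.W L (max s3 0) (p.1+p.2)
      * (𝔄 p.1 * 𝔅 p.2 * ℭ (p.1+p.2)) with ht3def
  set t4 : TriEst.G × TriEst.G → ENNReal := fun p =>
    TriEst.W L (max s1 0) p.1 * TriEst.W L (r - max s1 0) (p.1+p.2)
      * (𝔄 p.1 * 𝔅 p.2 * ℭ (p.1+p.2)) with ht4def
  set t5 : TriEst.G × TriEst.G → ENNReal := fun p =>
    TriEst.W L (max s2 0) p.2 * TriEst.W L (r - max s2 0) (p.1+p.2)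
      * (𝔄 p.1 * 𝔅 p.2 * ℭ (p.1+p.2)) with ht5def
  set t6 : TriEst.G × TriEst.G → ENNReal := fun p =>
    TriEst.W L (r - max s3 0) p.2 * TriEst.W L (max s3 0) (p.1+p.2)
      * (𝔄 p.1 * 𝔅 p.2 * ℭ (p.1+p.2)) with ht6def
  have hτnn : ∀ (a b : ℝ) (k' m' : TriEst.G) (k m : TriEst.G),
      0 ≤ TriEst.wneg L a k' * TriEst.wneg L b m' * TriEst.DD L s1 s2 s3 u v w k m :=
    fun a b k' m' k m => mul_nonneg (mul_nonneg (TriEst.wneg_nonneg _ _ _)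
      (TriEst.wneg_nonneg _ _ _)) (TriEst.DD_nonneg _ _ _ _ _ _ _ _ _)
  have hofτ : ∀ (a b : ℝ) (k' m' : TriEst.G) (k m : TriEst.G),
      ENNReal.ofReal (TriEst.wneg L a k' * TriEst.wneg L b m' * TriEst.DD L s1 s2 s3 u v w k m)
        = TriEst.W L a k' * TriEst.W L b m' * (𝔄 k * 𝔅 m * ℭ (k+m)) := by
    intro a b k' m' k m
    rw [TriEst.DD, TriEst.W, TriEst.W,
      ENNReal.ofReal_mul (mul_nonneg (TriEst.wneg_nonneg _ _ _) (TriEst.wneg_nonneg _ _ _)),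
      ENNReal.ofReal_mul (TriEst.wneg_nonneg _ _ _),
      ENNReal.ofReal_mul (mul_nonneg (Real.sqrt_nonneg _) (Real.sqrt_nonneg _)),
      ENNReal.ofReal_mul (Real.sqrt_nonneg _)]
  have hstep : (∑' p : TriEst.G × TriEst.G, ENNReal.ofReal (Φ p))
      ≤ ENNReal.ofReal c₀ *
        ((∑' p, t1 p) + (∑' p, t2 p) + (∑' p, t3 p) + (∑' p, t4 p)
          + (∑' p, t5 p) + (∑' p, t6 p)) := by
    have hptw : ∀ p : TriEst.G × TriEst.G, ENNReal.ofReal (Φ p)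
        ≤ ENNReal.ofReal c₀ * (t1 p + t2 p + t3 p + t4 p + t5 p + t6 p) := by
      intro p
      have h := TriEst.master_pointwise hL s1 s2 s3 h12 h13 h23 u v w
        hu.mean_zero hw.mean_zero p.1 p.2
      have h2 := ENNReal.ofReal_le_ofReal h
      refine le_trans (by exact h2) (le_of_eq ?_)
      rw [ENNReal.ofReal_mul hc₀pos.le]
      congr 1
      rw [ENNReal.ofReal_add (by
            have h1 := hτnn (max s1 0) (r - max s1 0) p.1 p.2 p.1 p.2
            have h2 := hτnn (r - max s2 0) (max s2 0) p.1 p.2 p.1 p.2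
            have h3 := hτnn (r - max s3 0) (max s3 0) p.1 (p.1+p.2) p.1 p.2
            have h4 := hτnn (max s1 0) (r - max s1 0) p.1 (p.1+p.2) p.1 p.2
            have h5 := hτnn (max s2 0) (r - max s2 0) p.2 (p.1+p.2) p.1 p.2
            linarith) (hτnn (r - max s3 0) (max s3 0) p.2 (p.1+p.2) p.1 p.2),
        ENNReal.ofReal_add (by
            have h1 := hτnn (max s1 0) (r - max s1 0) p.1 p.2 p.1 p.2
            have h2 := hτnn (r - max s2 0) (max s2 0) p.1 p.2 p.1 p.2
            have h3 := hτnn (r - max s3 0) (max s3 0) p.1 (p.1+p.2) p.1 p.2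
            have h4 := hτnn (max s1 0) (r - max s1 0) p.1 (p.1+p.2) p.1 p.2
            linarith) (hτnn (max s2 0) (r - max s2 0) p.2 (p.1+p.2) p.1 p.2),
        ENNReal.ofReal_add (by
            have h1 := hτnn (max s1 0) (r - max s1 0) p.1 p.2 p.1 p.2
            have h2 := hτnn (r - max s2 0) (max s2 0) p.1 p.2 p.1 p.2
            have h3 := hτnn (r - max s3 0) (max s3 0) p.1 (p.1+p.2) p.1 p.2
            linarith) (hτnn (max s1 0) (r - max s1 0) p.1 (p.1+p.2) p.1 p.2),
        ENNReal.ofReal_add (by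
            have h1 := hτnn (max s1 0) (r - max s1 0) p.1 p.2 p.1 p.2
            have h2 := hτnn (r - max s2 0) (max s2 0) p.1 p.2 p.1 p.2
            linarith) (hτnn (r - max s3 0) (max s3 0) p.1 (p.1+p.2) p.1 p.2),
        ENNReal.ofReal_add (hτnn (max s1 0) (r - max s1 0) p.1 p.2 p.1 p.2)
          (hτnn (r - max s2 0) (max s2 0) p.1 p.2 p.1 p.2)]
      rw [hofτ, hofτ, hofτ, hofτ, hofτ, hofτ]
    calc (∑' p : TriEst.G × TriEst.G, ENNReal.ofReal (Φ p))
        ≤ ∑' p : TriEst.G × TriEst.G,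
            ENNReal.ofReal c₀ * (t1 p + t2 p + t3 p + t4 p + t5 p + t6 p) :=
          ENNReal.tsum_le_tsum hptw
      _ = ENNReal.ofReal c₀ *
            ∑' p : TriEst.G × TriEst.G, (t1 p + t2 p + t3 p + t4 p + t5 p + t6 p) :=
          ENNReal.tsum_mul_left
      _ = _ := by
          rw [ENNReal.tsum_add, ENNReal.tsum_add, ENNReal.tsum_add, ENNReal.tsum_add,
            ENNReal.tsum_add]
  have hS1 : (∑' p, t1 p) ≤ KK * (ENNReal.ofReal NV1 * ENNReal.ofReal NV2 * ENNReal.ofReal NV3) := by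
    have h := TriEst.pairEst L hL (max s1 0) (r - max s1 0) he1a he1b 𝔄 𝔅 ℭ
    rw [show max s1 0 + (r - max s1 0) = r from by ring, hnA, hnB, hnC] at h
    exact h
  have hS2 : (∑' p, t2 p) ≤ KK * (ENNReal.ofReal NV1 * ENNReal.ofReal NV2 * ENNReal.ofReal NV3) := by
    have h := TriEst.pairEst L hL (r - max s2 0) (max s2 0) he2b he2a 𝔄 𝔅 ℭ
    rw [show (r - max s2 0) + max s2 0 = r from by ring, hnA, hnB, hnC] at h
    exact h
  have hS3 : (∑' p, t3 p) ≤ KK * (ENNReal.ofReal NV1 * ENNReal.ofReal NV2 * ENNReal.ofReal NV3) := by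
    have h := TriEst.pairEst' L hL (r - max s3 0) (max s3 0) he3b he3a 𝔄 𝔅 ℭ
    rw [show (r - max s3 0) + max s3 0 = r from by ring, hnA, hnB, hnC] at h
    exact h
  have hS4 : (∑' p, t4 p) ≤ KK * (ENNReal.ofReal NV1 * ENNReal.ofReal NV2 * ENNReal.ofReal NV3) := by
    have h := TriEst.pairEst' L hL (max s1 0) (r - max s1 0) he1a he1b 𝔄 𝔅 ℭ
    rw [show max s1 0 + (r - max s1 0) = r from by ring, hnA, hnB, hnC] at h
    exact h
  have hS5 : (∑' p, t5 p) ≤ KK * (ENNReal.ofReal NV1 * ENNReal.ofReal NV2 * ENNReal.ofReal NV3) := by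
    have h := TriEst.pairEst'' L hL (max s2 0) (r - max s2 0) he2a he2b 𝔄 𝔅 ℭ
    rw [show max s2 0 + (r - max s2 0) = r from by ring, hnA, hnB, hnC] at h
    exact h
  have hS6 : (∑' p, t6 p) ≤ KK * (ENNReal.ofReal NV1 * ENNReal.ofReal NV2 * ENNReal.ofReal NV3) := by
    have h := TriEst.pairEst'' L hL (r - max s3 0) (max s3 0) he3b he3a 𝔄 𝔅 ℭ
    rw [show (r - max s3 0) + max s3 0 = r from by ring, hnA, hnB, hnC] at h
    exact h
  set KV : ℝ := Kop * (NV1 * NV2 * NV3) with hKVdef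
  have hPnn : 0 ≤ NV1 * NV2 * NV3 := mul_nonneg (mul_nonneg hNV1nn hNV2nn) hNV3nn
  have hKVnn : 0 ≤ KV := mul_nonneg hKopnn hPnn
  have hRM : KK * (ENNReal.ofReal NV1 * ENNReal.ofReal NV2 * ENNReal.ofReal NV3)
      = ENNReal.ofReal KV := by
    rw [hKVdef, ENNReal.ofReal_mul hKopnn, ENNReal.ofReal_mul (mul_nonneg hNV1nn hNV2nn),
      ENNReal.ofReal_mul hNV1nn, hKopdef, ENNReal.ofReal_toReal hKKtop]
  set M : ℝ := c₀ * (KV + KV + KV + KV + KV + KV) with hMdef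
  have hMnn : 0 ≤ M := mul_nonneg hc₀pos.le (by linarith)
  have hM : (∑' p : TriEst.G × TriEst.G, ENNReal.ofReal (Φ p)) ≤ ENNReal.ofReal M := by
    refine hstep.trans ?_
    have h6 : (∑' p, t1 p) + (∑' p, t2 p) + (∑' p, t3 p) + (∑' p, t4 p)
        + (∑' p, t5 p) + (∑' p, t6 p)
        ≤ ENNReal.ofReal KV + ENNReal.ofReal KV + ENNReal.ofReal KV + ENNReal.ofReal KV
          + ENNReal.ofReal KV + ENNReal.ofReal KV := by
      refine add_le_add (add_le_add (add_le_add (add_le_add (add_le_add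
        (hS1.trans_eq hRM) (hS2.trans_eq hRM)) (hS3.trans_eq hRM)) (hS4.trans_eq hRM))
        (hS5.trans_eq hRM)) (hS6.trans_eq hRM)
    refine (mul_le_mul_right h6 _).trans (le_of_eq ?_)
    rw [← ENNReal.ofReal_add hKVnn hKVnn, ← ENNReal.ofReal_add (by linarith) hKVnn,
      ← ENNReal.ofReal_add (by linarith) hKVnn, ← ENNReal.ofReal_add (by linarith) hKVnn,
      ← ENNReal.ofReal_add (by linarith) hKVnn, ← ENNReal.ofReal_mul hc₀pos.le, hMdef]
  have hTne : (∑' p : TriEst.G × TriEst.G, ENNReal.ofReal (Φ p)) ≠ ⊤ :=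
    (hM.trans_lt ENNReal.ofReal_lt_top).ne
  have hsummΦ : Summable Φ := by
    have h := ENNReal.summable_toReal hTne
    exact h.congr fun p => ENNReal.toReal_ofReal (hΦnn p)
  refine ⟨hsummΦ, ?_⟩
  have htsum : (∑' p, Φ p) ≤ M := by
    have h1 : ENNReal.ofReal (∑' p, Φ p) = ∑' p : TriEst.G × TriEst.G, ENNReal.ofReal (Φ p) :=
      ENNReal.ofReal_tsum_of_nonneg hΦnn hsummΦ
    refine (ENNReal.ofReal_le_ofReal_iff hMnn).mp ?_
    rw [h1]
    exact hM
  have hbf : |bform L u v w| ≤ L^3 * ∑' p, Φ p := by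
    have hs : Summable fun p : (Fin 3 → ℤ) × (Fin 3 → ℤ) => ‖(∑ i, ∑ j,
        u p.1 j * (Complex.I * ((2 * π / L : ℝ) : ℂ) * ((p.2 j : ℤ) : ℂ)) * v p.2 i *
          w (-(p.1 + p.2)) i : ℂ)‖ :=
      hsummΦ.congr fun p => rfl
    have h2 := norm_tsum_le_tsum_norm hs
    calc |bform L u v w|
        ≤ norm (((L ^ 3 : ℝ) : ℂ) * ∑' p : (Fin 3 → ℤ) × (Fin 3 → ℤ),
            ∑ i, ∑ j,
              u p.1 j * (Complex.I * ((2 * π / L : ℝ) : ℂ) * ((p.2 j : ℤ) : ℂ)) * v p.2 i *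
                w (-(p.1 + p.2)) i) := Complex.abs_re_le_norm _
      _ = L^3 * norm (∑' p : (Fin 3 → ℤ) × (Fin 3 → ℤ),
            ∑ i, ∑ j,
              u p.1 j * (Complex.I * ((2 * π / L : ℝ) : ℂ) * ((p.2 j : ℤ) : ℂ)) * v p.2 i *
                w (-(p.1 + p.2)) i) := by
          rw [norm_mul, Complex.norm_real, Real.norm_eq_abs, abs_of_pos hL3]
      _ ≤ L^3 * ∑' p, Φ p := by
          refine mul_le_mul_of_nonneg_left ?_ hL3.le
          refine le_trans (le_of_eq rfl) (h2.trans (le_of_eq ?_))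
          exact tsum_congr fun p => rfl
  calc |bform L u v w| ≤ L^3 * ∑' p, Φ p := hbf
    _ ≤ L^3 * M := mul_le_mul_of_nonneg_left htsum hL3.le
    _ ≤ L ^ 3 * (c₀ * (6 * (Kop + 1))) * NV1 * NV2 * NV3 := by
        have expand : L^3 * M = (L^3 * (c₀ * (6 * Kop))) * (NV1 * NV2 * NV3) := by
          rw [hMdef, hKVdef]
          ring
        have expand2 : L ^ 3 * (c₀ * (6 * (Kop + 1))) * NV1 * NV2 * NV3
            = (L^3 * (c₀ * (6 * (Kop+1)))) * (NV1 * NV2 * NV3) := by ring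
        rw [expand, expand2]
        refine mul_le_mul_of_nonneg_right ?_ hPnn
        nlinarith [mul_pos hL3 hc₀pos]
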